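/- For all α, β, γ ∈ ℕ and all p, q ∈ G, the eventual value of the double coset K[α]·(p · Θ_j[β] · q)·K[γ] does not depend on the choice of representatives: if p' ∈ K[α]·p·K[β] and q' ∈ K[β]·q·K[γ], then there exists N such that for all j ≥ N, K[α]·(p' · Θ_j[β] · q')·K[γ] = K[α]·(p · Θ_j[β] · q)·K[γ]. -/

import Mathlib

open Equiv

abbrev P3 := Equiv.Perm ℕ × Equiv.Perm ℕ × Equiv.Perm ℕ

/-- The subgroup of finitely supported permutations of `ℕ`. -/
def Sinf : Subgroup (Equiv.Perm ℕ) where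
  carrier := {g | {x | g x ≠ x}.Finite}
  one_mem' := by
    show Set.Finite {x | (1 : Equiv.Perm ℕ) x ≠ x}
    convert Set.finite_empty
    ext x; simp
  mul_mem' {f g} hf hg := by
    apply Set.Finite.subset (hf.union hg)
    intro x hx
    simp only [Set.mem_setOf_eq, Set.mem_union, Equiv.Perm.mul_apply] at hx ⊢
    by_contra hc
    push_neg at hc
    rw [hc.2] at hx
    exact hx hc.1
  inv_mem' {g} hg := by
    apply Set.Finite.subset hg
    intro x hx
    simp only [Set.mem_setOf_eq] at hx ⊢
    intro h
    apply hx
    apply g.injective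
    rw [← Equiv.Perm.mul_apply, mul_inv_cancel, Equiv.Perm.one_apply, h]

/-- Permutations fixing every point `< α`. -/
def fixLt (α : ℕ) : Subgroup (Equiv.Perm ℕ) where
  carrier := {g | ∀ i < α, g i = i}
  one_mem' := fun _ _ => rfl
  mul_mem' {f g} hf hg := fun i hi => by
    simp only [Equiv.Perm.mul_apply, hg i hi, hf i hi]
  inv_mem' {g} hg := fun i hi => by
    apply g.injective
    rw [← Equiv.Perm.mul_apply, mul_inv_cancel, Equiv.Perm.one_apply, hg i hi]

/-- The diagonal embedding of `Perm ℕ` into the triple product. -/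
def diag3 : Equiv.Perm ℕ →* P3 where
  toFun h := (h, h, h)
  map_one' := rfl
  map_mul' _ _ := rfl

/-- `G = S_∞ × S_∞ × S_∞`. -/
def Ggrp : Subgroup P3 := Sinf.prod (Sinf.prod Sinf)

/-- `K[α]`: diagonal triples `(h,h,h)` with `h ∈ S_∞` fixing `0,…,α-1`. -/
def KK (α : ℕ) : Subgroup P3 := Subgroup.map diag3 (Sinf ⊓ fixLt α)

/-- The double coset `L·p·M`. -/
def dcosOf (L M : Subgroup P3) (p : P3) : Set P3 :=
  {y | ∃ a ∈ L, ∃ b ∈ M, y = a * p * b}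

/-- underlying function of `θ_j[β]`. -/
def thetaFun (β j : ℕ) (x : ℕ) : ℕ :=
  if β ≤ x ∧ x < β + j then x + j
  else if β + j ≤ x ∧ x < β + 2 * j then x - j
  else x

lemma thetaFun_invol (β j : ℕ) : ∀ x, thetaFun β j (thetaFun β j x) = x := by
  intro x
  simp only [thetaFun]
  split_ifs <;> omega

/-- `θ_j[β]`: swaps the blocks `[β, β+j)` and `[β+j, β+2j)`. -/
def theta (β j : ℕ) : Equiv.Perm ℕ :=
  ⟨thetaFun β j, thetaFun β j, thetaFun_invol β j, thetaFun_invol β j⟩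

lemma theta_mem_Sinf (β j : ℕ) : theta β j ∈ Sinf := by
  apply Set.Finite.subset (Set.finite_Iio (β + 2 * j))
  intro x hx
  simp only [Set.mem_setOf_eq, theta, Equiv.coe_fn_mk, Set.mem_Iio] at hx ⊢
  by_contra hc
  push_neg at hc
  apply hx
  simp only [thetaFun]
  split_ifs <;> omega

/-- `Θ_j[β] = (θ_j[β], θ_j[β], θ_j[β])`. -/
def ThetaP (β j : ℕ) : P3 := diag3 (theta β j)

lemma KK_le_G {α : ℕ} : KK α ≤ Ggrp := by
  rintro g ⟨h, hh, rfl⟩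
  exact ⟨hh.1, hh.1, hh.1⟩

lemma Theta_mem_G (β j : ℕ) : ThetaP β j ∈ Ggrp :=
  ⟨theta_mem_Sinf β j, theta_mem_Sinf β j, theta_mem_Sinf β j⟩

/-! For `j` large, conjugation by `Θ_j[β]` moves an element of `K[β]` (whose support is bounded)
into the block `[β + j, β + 2j)`, far beyond the supports of `p`, `q` and the other
representatives. There it commutes with them and lies in `K[α]` and `K[γ]`, so in
`(a p b) Θ (c q d)` the factor `b` can be pushed through `Θ` and `q` to the right, and `c` through
`Θ` and `p` to the left, without leaving the double coset. -/

open DoubleCoset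

lemma dcosOf_eq_doubleCoset (L M : Subgroup P3) (p : P3) :
    dcosOf L M p = doubleCoset p L M := by
  ext y
  simp [dcosOf, mem_doubleCoset]

def fixGe (n : ℕ) : Subgroup (Perm ℕ) := fixingSubgroup (Perm ℕ) (Set.Ici n)

def fixGe3 (n : ℕ) : Subgroup P3 := (fixGe n).prod ((fixGe n).prod (fixGe n))

lemma mem_fixGe {n : ℕ} {g : Perm ℕ} : g ∈ fixGe n ↔ ∀ x, n ≤ x → g x = x := by
  simp [fixGe, mem_fixingSubgroup_iff, Perm.smul_def]

lemma fixGe_mono {n m : ℕ} (h : n ≤ m) : fixGe n ≤ fixGe m :=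
  fixingSubgroup_antitone (Perm ℕ) ℕ (Set.Ici_subset_Ici.2 h)

lemma fixGe3_mono {n m : ℕ} (h : n ≤ m) : fixGe3 n ≤ fixGe3 m :=
  Subgroup.prod_mono (fixGe_mono h) (Subgroup.prod_mono (fixGe_mono h) (fixGe_mono h))

lemma exists_mem_fixGe {g : Perm ℕ} (hg : g ∈ Sinf) : ∃ n, g ∈ fixGe n := by
  obtain ⟨B, hB⟩ := (hg : {x | g x ≠ x}.Finite).bddAbove
  exact ⟨B + 1, mem_fixGe.2 fun x hx => not_not.1 fun h => absurd (hB h) (by omega)⟩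

lemma exists_mem_fixGe3 {r : P3} (hr : r ∈ Ggrp) : ∃ n, r ∈ fixGe3 n := by
  obtain ⟨n₁, h₁⟩ := exists_mem_fixGe hr.1
  obtain ⟨n₂, h₂⟩ := exists_mem_fixGe hr.2.1
  obtain ⟨n₃, h₃⟩ := exists_mem_fixGe hr.2.2
  exact ⟨n₁ + n₂ + n₃, fixGe_mono (by omega) h₁, fixGe_mono (by omega) h₂,
    fixGe_mono (by omega) h₃⟩

lemma commute_of_mem_fixGe_of_mem_fixLt {n : ℕ} {g h : Perm ℕ} (hg : g ∈ fixGe n)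
    (hh : h ∈ fixLt n) : Commute g h :=
  Perm.Disjoint.commute fun x =>
    if hx : x < n then Or.inr (hh x hx) else Or.inl (mem_fixGe.1 hg x (by omega))

lemma commute_of_mem_fixGe3_of_mem_KK {n : ℕ} {r k : P3} (hr : r ∈ fixGe3 n)
    (hk : k ∈ KK n) : Commute r k := by
  obtain ⟨h, ⟨-, hh⟩, rfl⟩ := hk
  exact Prod.ext (commute_of_mem_fixGe_of_mem_fixLt hr.1 hh)
    (Prod.ext (commute_of_mem_fixGe_of_mem_fixLt hr.2.1 hh)
      (commute_of_mem_fixGe_of_mem_fixLt hr.2.2 hh))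

lemma KK_antitone {α β : ℕ} (h : α ≤ β) : KK β ≤ KK α :=
  Subgroup.map_mono (inf_le_inf_left _ fun _ hg i hi => hg i (by omega))

lemma theta_mul_self (β j : ℕ) : theta β j * theta β j = 1 :=
  Perm.ext (thetaFun_invol β j)

lemma ThetaP_mul_self (β j : ℕ) : ThetaP β j * ThetaP β j = 1 := by
  rw [ThetaP, ← map_mul, theta_mul_self, map_one]

/-- `θ_j[β]` fixes `[0, β)` and sends `[β, β + j)` into `[β + j, β + 2j)`, where `b` is trivial. -/
lemma theta_mul_mul_theta_mem_fixLt {β j : ℕ} {b : Perm ℕ} (hb : b ∈ fixLt β)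
    (hb' : b ∈ fixGe (β + j)) : theta β j * b * theta β j ∈ fixLt (β + j) := by
  intro x hx
  change thetaFun β j (b (thetaFun β j x)) = x
  by_cases hxβ : x < β
  · have hθ : thetaFun β j x = x := by simp only [thetaFun]; split_ifs <;> omega
    rw [hθ, hb x hxβ, hθ]
  · have hθ : thetaFun β j x = x + j := by simp only [thetaFun]; split_ifs <;> omega
    rw [hθ, mem_fixGe.1 hb' _ (by omega)]
    simp only [thetaFun]; split_ifs <;> omega

lemma ThetaP_mul_mul_ThetaP_mem_KK {β j : ℕ} {k : P3} (hk : k ∈ KK β)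
    (hk' : k ∈ fixGe3 (β + j)) : ThetaP β j * k * ThetaP β j ∈ KK (β + j) := by
  obtain ⟨b, ⟨hbS, hbβ⟩, rfl⟩ := hk
  refine ⟨theta β j * b * theta β j, ⟨?_, theta_mul_mul_theta_mem_fixLt hbβ hk'.1⟩, ?_⟩
  · exact mul_mem (mul_mem (theta_mem_Sinf β j) hbS) (theta_mem_Sinf β j)
  · simp only [ThetaP, map_mul]

/-- With `t` an involution, `b` and `c` pass through `t` as their `t`-conjugates. -/
lemma mul_mul_mul_eq_of_mul_self_eq_one {H : Type*} [Group H] {t : H} (ht : t * t = 1)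
    {a p b c q d : H} (hp : Commute p (t * c * t)) (hb : Commute b (t * c * t))
    (hq : Commute q (t * b * t)) :
    a * p * b * t * (c * q * d) = a * (t * c * t) * (p * t * q) * (t * b * t * d) := by
  have htt (x : H) : t * (t * x) = x := by rw [← mul_assoc, ht, one_mul]
  calc a * p * b * t * (c * q * d) = a * p * (b * (t * c * t)) * t * q * d := by
        simp only [mul_assoc, htt]
    _ = a * (p * (t * c * t)) * b * t * q * d := by rw [hb.eq]; simp only [mul_assoc]
    _ = a * (t * c * t) * p * t * ((t * b * t) * q) * d := by
        rw [hp.eq]; simp only [mul_assoc, htt]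
    _ = a * (t * c * t) * (p * t * q) * (t * b * t * d) := by
        rw [← hq.eq]; simp only [mul_assoc]

/-- The eventual value of the double coset `K[α]·(p·Θ_j[β]·q)·K[γ]`
does not depend on the choice of representatives `p` of `K[α]·p·K[β]` and `q` of
`K[β]·q·K[γ]`. -/
theorem doubleCoset_limit_independent_of_representatives
    (α β γ : ℕ) (p q p' q' : P3) (hp : p ∈ Ggrp) (hq : q ∈ Ggrp)
    (hp' : p' ∈ dcosOf (KK α) (KK β) p) (hq' : q' ∈ dcosOf (KK β) (KK γ) q) :
    ∃ N : ℕ, ∀ j : ℕ, N ≤ j →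
      dcosOf (KK α) (KK γ) (p' * ThetaP β j * q') =
        dcosOf (KK α) (KK γ) (p * ThetaP β j * q) := by
  obtain ⟨a, ha, b, hb, rfl⟩ := hp'
  obtain ⟨c, hc, d, hd, rfl⟩ := hq'
  obtain ⟨np, hnp⟩ := exists_mem_fixGe3 hp
  obtain ⟨nq, hnq⟩ := exists_mem_fixGe3 hq
  obtain ⟨nb, hnb⟩ := exists_mem_fixGe3 (KK_le_G hb)
  obtain ⟨nc, hnc⟩ := exists_mem_fixGe3 (KK_le_G hc)
  refine ⟨α + γ + np + nq + nb + nc, fun j hj => ?_⟩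
  have lift {n : ℕ} {r : P3} (hr : r ∈ fixGe3 n) (hn : n ≤ j) : r ∈ fixGe3 (β + j) :=
    fixGe3_mono (by omega) hr
  have hc' := ThetaP_mul_mul_ThetaP_mem_KK hc (lift hnc (by omega))
  have hb' := ThetaP_mul_mul_ThetaP_mem_KK hb (lift hnb (by omega))
  rw [dcosOf_eq_doubleCoset, dcosOf_eq_doubleCoset]
  refine doubleCoset_eq_of_mem (mem_doubleCoset.2 ⟨_, mul_mem ha (KK_antitone (by omega) hc'),
    _, mul_mem (KK_antitone (by omega) hb') hd, ?_⟩)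
  exact mul_mul_mul_eq_of_mul_self_eq_one (ThetaP_mul_self β j)
    (commute_of_mem_fixGe3_of_mem_KK (lift hnp (by omega)) hc')
    (commute_of_mem_fixGe3_of_mem_KK (lift hnb (by omega)) hc')
    (commute_of_mem_fixGe3_of_mem_KK (lift hnq (by omega)) hb')
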